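/- Let L ∈ 𝐋 and V ∈ 𝐕(L). Then for every u ∈ [0,1) one has 𝐎*(L,L) = 𝐎*(L, L+uV), and moreover 𝐎*(L,L) ⊆ 𝐎*(L, L+V). -/

import Mathlib

open Matrix Filter Topology

/-! Expanding the square, `‖L - M O‖²_F = ‖L‖²_F - 2 ⟨L, M O⟩ + ‖M‖²_F` for orthogonal `O`, so
`𝐎*(L, M)` is the set of maximisers over `𝐎` of `O ↦ ⟨L, M O⟩`. For `M = L` one has
`2 (⟨L, L⟩ - ⟨L, L O⟩) = ‖L - L O‖²_F`, hence `𝐎*(L, L) = {O ∈ 𝐎 : L O = L}`.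

Write `V = M P - L`. Then `L + u V = (1 - u) L + u M P`, so the objective for `L + u V` is
`(1 - u) ⟨L, L O⟩ + u ⟨L, M P O⟩`. The second term is maximal at `O = 1`, because `P` is optimal
for `M` and `𝐎` is closed under products, and it is equally large at every `O ∈ 𝐎*(L, L)`, since
`L O = L` gives `⟨L, M P O⟩ = ⟨L Oᵀ, M P⟩ = ⟨L, M P⟩`. Adding to an objective a second one that is
maximal wherever the first is keeps the maximisers for all weights `u ≤ 1` and does not create
new ones for `u < 1`. -/

/-- Square matrices of size `dT × dT`, indexed by blocks: index `(t, i)` is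
row/column `i` within block `t`. -/
abbrev Mat (d T : ℕ) := Matrix (Fin T × Fin d) (Fin T × Fin d) ℝ

/-- The `t`-th diagonal `d × d` block of a `dT × dT` matrix. -/
def blk {d T : ℕ} (A : Mat d T) (t : Fin T) : Matrix (Fin d) (Fin d) ℝ :=
  fun i j => A (t, i) (t, j)

/-- The `t`-th block column of a `dT × dT` matrix, a `dT × d` matrix. -/
def colBlk {d T : ℕ} (A : Mat d T) (t : Fin T) : Matrix (Fin T × Fin d) (Fin d) ℝ :=
  fun p j => A p (t, j)

/-- Membership in `𝐋`: block lower triangular matrices. -/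
def memL {d T : ℕ} (A : Mat d T) : Prop :=
  ∀ (t s : Fin T) (i j : Fin d), t < s → A (t, i) (s, j) = 0

/-- Membership in `𝐎`: block diagonal matrices with orthogonal `d × d` diagonal blocks
(equivalently: block diagonal and orthogonal). -/
def memO {d T : ℕ} (O : Mat d T) : Prop :=
  (∀ (t s : Fin T) (i j : Fin d), t ≠ s → O (t, i) (s, j) = 0) ∧ Oᵀ * O = 1

/-- The Frobenius norm of a real matrix. -/
noncomputable def frobNorm {m n : Type*} [Fintype m] [Fintype n] (A : Matrix m n ℝ) : ℝ :=
  Real.sqrt (∑ i, ∑ j, (A i j) ^ 2)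

/-- The Frobenius inner product of two real matrices. -/
noncomputable def frobInner {m n : Type*} [Fintype m] [Fintype n] (A B : Matrix m n ℝ) : ℝ :=
  ∑ i, ∑ j, A i j * B i j

/-- The adapted Bures–Wasserstein distance `d_ABW(L, M) = inf_{O ∈ 𝐎} ‖L - M O‖_F`. -/
noncomputable def dABW {d T : ℕ} (L M : Mat d T) : ℝ :=
  sInf {r : ℝ | ∃ O : Mat d T, memO O ∧ r = frobNorm (L - M * O)}

/-- The set `𝐎*(L, M)` of optimizers of `inf_{O ∈ 𝐎} ‖L - M O‖_F`. -/
noncomputable def OStar {d T : ℕ} (L M : Mat d T) : Set (Mat d T) :=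
  {O | memO O ∧ frobNorm (L - M * O) = dABW L M}

/-- The set `𝐕(L) = {M P - L : M ∈ 𝐋, P ∈ 𝐎*(L, M)}`. -/
noncomputable def VSet {d T : ℕ} (L : Mat d T) : Set (Mat d T) :=
  {V | ∃ M P : Mat d T, memL M ∧ P ∈ OStar L M ∧ V = M * P - L}

/-- The set `𝒱(L) = {V ∈ 𝐋 : (Vᵀ L)_{t,t} is symmetric for all t}`. -/
def calV {d T : ℕ} (L : Mat d T) : Set (Mat d T) :=
  {V | memL V ∧ ∀ t : Fin T, (blk (Vᵀ * L) t).IsSymm}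

/-- The set `𝐋^reg = {L ∈ 𝐋 : (Lᵀ L)_{t,t} is positive definite for all t}`. -/
def LReg {d T : ℕ} : Set (Mat d T) :=
  {L | memL L ∧ ∀ t : Fin T, (blk (Lᵀ * L) t).PosDef}

/-- The sum of the singular values of a real square matrix `A`,
i.e. the trace of the positive semidefinite square root of `Aᵀ A`. -/
noncomputable def svSum {n : ℕ} (A : Matrix (Fin n) (Fin n) ℝ) : ℝ :=
  (((Matrix.posSemidef_conjTranspose_mul_self A).1.eigenvectorUnitary : Matrix (Fin n) (Fin n) ℝ) *
    diagonal (Real.sqrt ∘ (Matrix.posSemidef_conjTranspose_mul_self A).1.eigenvalues) *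
    (star (Matrix.posSemidef_conjTranspose_mul_self A).1.eigenvectorUnitary : Matrix (Fin n) (Fin n) ℝ)).trace

/-- The operator norm of a real matrix: the supremum of the euclidean norm `‖A x‖₂`
over the euclidean unit ball. -/
noncomputable def opNorm {m n : Type*} [Fintype m] [Fintype n] (A : Matrix m n ℝ) : ℝ :=
  sSup {r : ℝ | ∃ x : n → ℝ, (∑ j, (x j) ^ 2) ≤ 1 ∧ r = Real.sqrt (∑ i, (A.mulVec x i) ^ 2)}

section ConvexCombination

variable {α : Type*} {s : Set α} {f g : α → ℝ} {u : ℝ}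

lemma IsMaxOn.convex_comb {a : α} (hf : IsMaxOn f s a) (hg : IsMaxOn g s a) (hu₀ : 0 ≤ u)
    (hu₁ : u ≤ 1) : IsMaxOn (fun x => (1 - u) * f x + u * g x) s a := fun x hx => by
  have hfx : f x ≤ f a := hf hx
  have hgx : g x ≤ g a := hg hx
  show (1 - u) * f x + u * g x ≤ (1 - u) * f a + u * g a
  nlinarith

lemma IsMaxOn.of_convex_comb {a b : α} (h : IsMaxOn (fun x => (1 - u) * f x + u * g x) s a)
    (ha : a ∈ s) (hb : b ∈ s) (hfb : IsMaxOn f s b) (hgb : IsMaxOn g s b) (hu₀ : 0 ≤ u)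
    (hu₁ : u < 1) : IsMaxOn f s a := fun x hx => by
  have hab : (1 - u) * f b + u * g b ≤ (1 - u) * f a + u * g a := h hb
  have hga : g a ≤ g b := hgb ha
  have hfx : f x ≤ f b := hfb hx
  show f x ≤ f a
  nlinarith

end ConvexCombination

section Frobenius

variable {m n k : Type*} [Fintype m] [Fintype n] [Fintype k]

lemma frobInner_eq_trace (A B : Matrix m n ℝ) : frobInner A B = (Aᵀ * B).trace := by
  simp only [frobInner, trace, diag, mul_apply, transpose_apply]
  exact Finset.sum_comm

lemma frobNorm_eq_sqrt_frobInner (A : Matrix m n ℝ) : frobNorm A = √(frobInner A A) := by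
  simp only [frobNorm, frobInner, sq]

lemma frobInner_comm (A B : Matrix m n ℝ) : frobInner A B = frobInner B A := by
  simp only [frobInner, mul_comm]

lemma frobInner_self_nonneg (A : Matrix m n ℝ) : 0 ≤ frobInner A A :=
  Finset.sum_nonneg fun _ _ => Finset.sum_nonneg fun _ _ => mul_self_nonneg _

lemma frobInner_self_eq_zero_iff {A : Matrix m n ℝ} : frobInner A A = 0 ↔ A = 0 := by
  rw [frobInner_eq_trace, ← conjTranspose_eq_transpose_of_trivial,
    trace_conjTranspose_mul_self_eq_zero_iff]

lemma frobInner_sub_sub_self (A B : Matrix m n ℝ) :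
    frobInner (A - B) (A - B) = frobInner A A - 2 * frobInner A B + frobInner B B := by
  simp only [frobInner, Matrix.sub_apply, ← Finset.sum_sub_distrib, ← Finset.sum_add_distrib,
    Finset.mul_sum]
  exact Finset.sum_congr rfl fun _ _ => Finset.sum_congr rfl fun _ _ => by ring

lemma frobInner_smul_add_smul_right (A B C : Matrix m n ℝ) (b c : ℝ) :
    frobInner A (b • B + c • C) = b * frobInner A B + c * frobInner A C := by
  simp only [frobInner, Matrix.add_apply, Matrix.smul_apply, smul_eq_mul, Finset.mul_sum,
    ← Finset.sum_add_distrib]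
  exact Finset.sum_congr rfl fun _ _ => Finset.sum_congr rfl fun _ _ => by ring

lemma frobInner_mul_transpose_left (A : Matrix m n ℝ) (B : Matrix m k ℝ) (O : Matrix k n ℝ) :
    frobInner (A * Oᵀ) B = frobInner A (B * O) := by
  rw [frobInner_eq_trace, frobInner_eq_trace, transpose_mul, transpose_transpose,
    ← Matrix.mul_assoc Aᵀ, trace_mul_comm (Aᵀ * B), Matrix.mul_assoc]

variable [DecidableEq n]

lemma frobInner_mul_self_of_mul_transpose_eq_one (A : Matrix m n ℝ) {O : Matrix n n ℝ}
    (hO : O * Oᵀ = 1) : frobInner (A * O) (A * O) = frobInner A A := by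
  rw [← frobInner_mul_transpose_left, Matrix.mul_assoc, hO, Matrix.mul_one, frobInner_comm]

lemma two_mul_sub_frobInner_mul_right (A : Matrix m n ℝ) {O : Matrix n n ℝ} (hO : O * Oᵀ = 1) :
    2 * (frobInner A A - frobInner A (A * O)) = frobInner (A - A * O) (A - A * O) := by
  rw [frobInner_sub_sub_self, frobInner_mul_self_of_mul_transpose_eq_one A hO]
  ring

lemma frobInner_mul_right_le (A : Matrix m n ℝ) {O : Matrix n n ℝ} (hO : O * Oᵀ = 1) :
    frobInner A (A * O) ≤ frobInner A A := by
  have := two_mul_sub_frobInner_mul_right A hO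
  linarith [frobInner_self_nonneg (A - A * O)]

lemma frobInner_mul_right_eq_iff (A : Matrix m n ℝ) {O : Matrix n n ℝ} (hO : O * Oᵀ = 1) :
    frobInner A (A * O) = frobInner A A ↔ A * O = A := by
  have h := two_mul_sub_frobInner_mul_right A hO
  refine ⟨fun heq => ?_, fun hAO => by rw [hAO]⟩
  have hzero : frobInner (A - A * O) (A - A * O) = 0 := by linarith
  exact (sub_eq_zero.mp (frobInner_self_eq_zero_iff.mp hzero)).symm

end Frobenius

section Optimizers

variable {d T : ℕ}

lemma memO.mul_transpose_eq_one {O : Mat d T} (hO : memO O) : O * Oᵀ = 1 :=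
  mul_eq_one_comm.mp hO.2

lemma memO_one : memO (1 : Mat d T) :=
  ⟨fun _ _ _ _ hts => one_apply_ne fun h => hts (congrArg Prod.fst h), by simp⟩

lemma memO.mul {O O' : Mat d T} (hO : memO O) (hO' : memO O') : memO (O * O') := by
  refine ⟨fun t s i j hts => ?_, ?_⟩
  · rw [mul_apply]
    refine Finset.sum_eq_zero fun r _ => ?_
    by_cases hr : r.1 = s
    · rw [hO.1 t r.1 i r.2 (hr ▸ hts), zero_mul]
    · rw [hO'.1 r.1 s r.2 j hr, mul_zero]
  · rw [transpose_mul, mul_assoc, ← mul_assoc Oᵀ, hO.2, one_mul, hO'.2]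

lemma frobNorm_sub_mul_le_iff (L M : Mat d T) {O O' : Mat d T} (hO : memO O) (hO' : memO O') :
    frobNorm (L - M * O) ≤ frobNorm (L - M * O') ↔ frobInner L (M * O') ≤ frobInner L (M * O) := by
  rw [frobNorm_eq_sqrt_frobInner, frobNorm_eq_sqrt_frobInner,
    Real.sqrt_le_sqrt_iff (frobInner_self_nonneg _), frobInner_sub_sub_self, frobInner_sub_sub_self,
    frobInner_mul_self_of_mul_transpose_eq_one M hO.mul_transpose_eq_one,
    frobInner_mul_self_of_mul_transpose_eq_one M hO'.mul_transpose_eq_one]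
  constructor <;> intro h <;> linarith

lemma mem_OStar_iff_forall_le (L M O : Mat d T) :
    O ∈ OStar L M ↔ memO O ∧ ∀ O', memO O' → frobNorm (L - M * O) ≤ frobNorm (L - M * O') := by
  have hbdd : BddBelow {r : ℝ | ∃ O : Mat d T, memO O ∧ r = frobNorm (L - M * O)} :=
    ⟨0, by rintro r ⟨O', -, rfl⟩; exact Real.sqrt_nonneg _⟩
  constructor
  · rintro ⟨hO, hmin⟩
    exact ⟨hO, fun O' hO' => hmin ▸ csInf_le hbdd ⟨O', hO', rfl⟩⟩
  · rintro ⟨hO, hmin⟩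
    refine ⟨hO, le_antisymm ?_ (csInf_le hbdd ⟨O, hO, rfl⟩)⟩
    refine le_csInf ⟨_, O, hO, rfl⟩ ?_
    rintro r ⟨O', hO', rfl⟩
    exact hmin O' hO'

lemma mem_OStar_iff_isMaxOn (L M O : Mat d T) :
    O ∈ OStar L M ↔ memO O ∧ IsMaxOn (fun R => frobInner L (M * R)) {R | memO R} O := by
  rw [mem_OStar_iff_forall_le]
  refine and_congr_right fun hO => forall_congr' fun O' => ?_
  exact imp_congr_right fun hO' => frobNorm_sub_mul_le_iff L M hO hO'

lemma mem_OStar_self_iff (L O : Mat d T) : O ∈ OStar L L ↔ memO O ∧ L * O = L := by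
  rw [mem_OStar_iff_isMaxOn]
  refine and_congr_right fun hO => ⟨fun hmax => ?_, fun hLO R hR => ?_⟩
  · refine (frobInner_mul_right_eq_iff L hO.mul_transpose_eq_one).mp
      (le_antisymm (frobInner_mul_right_le L hO.mul_transpose_eq_one) ?_)
    simpa using hmax (memO_one (d := d) (T := T))
  · change frobInner L (L * R) ≤ frobInner L (L * O)
    rw [hLO]
    exact frobInner_mul_right_le L hR.mul_transpose_eq_one

lemma isMaxOn_frobInner_mul_of_mem_OStar {L M P : Mat d T} (hP : P ∈ OStar L M) {O : Mat d T}
    (hO : O ∈ OStar L L) : IsMaxOn (fun R => frobInner L (M * P * R)) {R | memO R} O := by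
  obtain ⟨hPO, hPmax⟩ := (mem_OStar_iff_isMaxOn L M P).mp hP
  obtain ⟨hO, hLO⟩ := (mem_OStar_self_iff L O).mp hO
  have hLOt : L * Oᵀ = L := by
    rw [← hLO, Matrix.mul_assoc, hO.mul_transpose_eq_one, Matrix.mul_one, hLO]
  intro R hR
  change frobInner L (M * P * R) ≤ frobInner L (M * P * O)
  rw [← frobInner_mul_transpose_left L _ O, hLOt, Matrix.mul_assoc]
  exact hPmax (hPO.mul hR)

lemma mem_OStar_add_smul_sub_iff (L N O : Mat d T) (u : ℝ) :
    O ∈ OStar L (L + u • (N - L)) ↔ memO O ∧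
      IsMaxOn (fun R => (1 - u) * frobInner L (L * R) + u * frobInner L (N * R)) {R | memO R} O := by
  have hobj : ∀ R : Mat d T, frobInner L ((L + u • (N - L)) * R)
      = (1 - u) * frobInner L (L * R) + u * frobInner L (N * R) := fun R => by
    rw [← frobInner_smul_add_smul_right]
    congr 1
    simp only [add_mul, smul_mul_assoc, sub_mul, sub_smul, one_smul, smul_sub]
    abel
  simp only [mem_OStar_iff_isMaxOn, hobj]

end Optimizers

theorem stmt5_general (d T : ℕ) (L V : Mat d T)
    (hV : V ∈ VSet L) :
    (∀ u : ℝ, u ∈ Set.Ico (0 : ℝ) 1 → OStar L L = OStar L (L + u • V)) ∧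
    OStar L L ⊆ OStar L (L + V) := by
  obtain ⟨M, P, -, hP, rfl⟩ := hV
  have hsub : ∀ u : ℝ, 0 ≤ u → u ≤ 1 → OStar L L ⊆ OStar L (L + u • (M * P - L)) :=
    fun u hu₀ hu₁ O hO => (mem_OStar_add_smul_sub_iff L _ O u).mpr ⟨hO.1,
      ((mem_OStar_iff_isMaxOn L L O).mp hO).2.convex_comb
        (isMaxOn_frobInner_mul_of_mem_OStar hP hO) hu₀ hu₁⟩
  have hone : (1 : Mat d T) ∈ OStar L L := (mem_OStar_self_iff L 1).mpr ⟨memO_one, mul_one L⟩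
  refine ⟨fun u ⟨hu₀, hu₁⟩ => (hsub u hu₀ hu₁.le).antisymm fun O hO => ?_,
    by simpa only [one_smul] using hsub 1 zero_le_one le_rfl⟩
  obtain ⟨hO, hmax⟩ := (mem_OStar_add_smul_sub_iff L _ O u).mp hO
  exact (mem_OStar_iff_isMaxOn L L O).mpr ⟨hO, hmax.of_convex_comb hO memO_one
    ((mem_OStar_iff_isMaxOn L L 1).mp hone).2 (isMaxOn_frobInner_mul_of_mem_OStar hP hone) hu₀ hu₁⟩

/-- for `V ∈ 𝐕(L)`, `𝐎*(L,L) = 𝐎*(L, L + uV)` for `u ∈ [0,1)`, and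
`𝐎*(L,L) ⊆ 𝐎*(L, L + V)`. -/
theorem stmt5 (d T : ℕ) (hd : 0 < d) (hT : 0 < T) (L V : Mat d T)
    (hL : memL L) (hV : V ∈ VSet L) :
    (∀ u : ℝ, u ∈ Set.Ico (0 : ℝ) 1 → OStar L L = OStar L (L + u • V)) ∧
    OStar L L ⊆ OStar L (L + V) :=
  stmt5_general d T L V hV
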